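/- If Φ(x) = exp{∫₀ˣ (1/t)∫₀ᵗ f(s) ds dt} with f continuous, then the connection component ω₂(x₁,x₂) = −(x₁/x₂)·(ln Φ)′(x₁) (for x₂ ≠ 0) satisfies x₂·F₂₁(x₁,x₂) = f(x₁), where F₂₁ = −∂₁ω₂ (abelian, ω₁ = 0). -/

import Mathlib

open Real intervalIntegral

/-- `g(t) = (1/t)∫₀ᵗ f(s) ds`, extended continuously by `g(0) = f(0)`. -/
noncomputable def gfun (f : ℝ → ℝ) (t : ℝ) : ℝ :=
  if t = 0 then f 0 else (1 / t) * ∫ s in (0:ℝ)..t, f s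

/-- `Φ(x) = exp{∫₀ˣ g(t) dt}`. -/
noncomputable def Phi (f : ℝ → ℝ) (x : ℝ) : ℝ :=
  Real.exp (∫ t in (0:ℝ)..x, gfun f t)

/-- Connection component `ω₂(x₁,x₂) = −(x₁/x₂)·Φ′(x₁)/Φ(x₁)`. -/
noncomputable def omega2 (f : ℝ → ℝ) (x1 x2 : ℝ) : ℝ :=
  -(x1 / x2) * deriv (Phi f) x1 / Phi f x1

/-- Field strength `F₂₁ = ∂₂ω₁ − ∂₁ω₂` with `ω₁ = 0`. -/
noncomputable def F21 (f : ℝ → ℝ) (x1 x2 : ℝ) : ℝ :=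
  -(deriv (fun t => omega2 f t x2) x1)

lemma gfun_continuous (f : ℝ → ℝ) (hf : Continuous f) : Continuous (gfun f) := by
  have hprim : Continuous (fun t : ℝ => ∫ s in (0:ℝ)..t, f s) :=
    intervalIntegral.continuous_primitive (fun a b => hf.intervalIntegrable a b) 0
  rw [continuous_iff_continuousAt]
  intro t
  rcases eq_or_ne t 0 with rfl | ht
  · -- continuity at 0
    have hF : HasDerivAt (fun t : ℝ => ∫ s in (0:ℝ)..t, f s) (f 0) 0 :=
      intervalIntegral.integral_hasDerivAt_right (hf.intervalIntegrable 0 0)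
        (hf.stronglyMeasurableAtFilter _ _) hf.continuousAt
    have hslope := hasDerivAt_iff_tendsto_slope.mp hF
    have heq : (fun t : ℝ => gfun f t) =ᶠ[nhdsWithin 0 {(0:ℝ)}ᶜ]
        slope (fun t : ℝ => ∫ s in (0:ℝ)..t, f s) 0 := by
      filter_upwards [self_mem_nhdsWithin] with x hx
      simp only [Set.mem_compl_iff, Set.mem_singleton_iff] at hx
      simp [gfun, hx, slope, intervalIntegral.integral_same, mul_comm, div_eq_inv_mul]
    have h1 : Filter.Tendsto (gfun f) (nhdsWithin 0 {(0:ℝ)}ᶜ) (nhds (f 0)) :=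
      (Filter.Tendsto.congr' heq.symm hslope)
    have : Filter.Tendsto (gfun f) (nhds 0) (nhds (f 0)) := by
      rw [← nhdsNE_sup_pure 0]
      refine Filter.Tendsto.sup h1 ?_
      simpa [gfun] using tendsto_pure_nhds (gfun f) 0
    simpa [ContinuousAt, gfun] using this
  · have : (fun t : ℝ => gfun f t) =ᶠ[nhds t] fun t => (1 / t) * ∫ s in (0:ℝ)..t, f s := by
      filter_upwards [isOpen_compl_singleton.mem_nhds ht] with x hx
      simp only [Set.mem_compl_iff, Set.mem_singleton_iff] at hx
      simp [gfun, hx]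
    exact ContinuousAt.congr ((continuousAt_const.div continuousAt_id ht).mul hprim.continuousAt)
      this.symm

theorem stmt11 (f : ℝ → ℝ) (hf : Continuous f) :
    ∀ x1 x2 : ℝ, x2 ≠ 0 → x2 * F21 f x1 x2 = f x1 := by
  intro x1 x2 hx2
  have hg : Continuous (gfun f) := gfun_continuous f hf
  have hPhi : ∀ x : ℝ, HasDerivAt (Phi f) (gfun f x * Phi f x) x := by
    intro x
    have hG : HasDerivAt (fun x : ℝ => ∫ t in (0:ℝ)..x, gfun f t) (gfun f x) x :=
      intervalIntegral.integral_hasDerivAt_right (hg.intervalIntegrable 0 x)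
        (hg.stronglyMeasurableAtFilter _ _) hg.continuousAt
    have h := (Real.hasDerivAt_exp _).comp x hG
    rw [mul_comm] at h
    exact h
  have hodd : (fun t => omega2 f t x2) = fun t => -(1 / x2) * ∫ s in (0:ℝ)..t, f s := by
    funext t
    have hPne : Phi f t ≠ 0 := Real.exp_ne_zero _
    rw [omega2, (hPhi t).deriv]
    rcases eq_or_ne t 0 with rfl | ht
    · simp
    · rw [gfun, if_neg ht]
      field_simp
  have hF : HasDerivAt (fun t : ℝ => -(1 / x2) * ∫ s in (0:ℝ)..t, f s) (-(1 / x2) * f x1) x1 := by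
    exact HasDerivAt.const_mul _ (intervalIntegral.integral_hasDerivAt_right
      (hf.intervalIntegrable 0 x1) (hf.stronglyMeasurableAtFilter _ _) hf.continuousAt)
  rw [F21, hodd, hF.deriv]
  field_simp
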